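/- Let D be a generalized skew diagram and Key(D) = {(r,c) : there exists ĉ ≥ c with (r,ĉ) ∈ D} the minimal key diagram containing D. If the set of dark cloud positions of Key(D) equals that of D, then sf(D) = sf(Key(D)). -/
import Mathlib


open Finset

/-- A diagram: a finite set of cells in ℕ×ℕ (recorded as (row, column)),
some of which may be marked as ghost cells. -/
structure Diagram where
  cells : Finset (ℕ × ℕ)
  ghosts : Finset (ℕ × ℕ)
deriving DecidableEq

/-- `(r,c)` is the rightmost cell (ghost or not) in row `r` of `D`. -/
def Rightmost (D : Diagram) (r c : ℕ) : Prop :=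
  (r, c) ∈ D.cells ∧ ∀ c' > c, (r, c') ∉ D.cells

/-- A nontrivial K-Kohnert move at row `r` of `D` is possible, taking the
rightmost cell `(r,c)` of row `r` (a non-ghost cell) down to the highest empty
position `(rhat, c)` below it in column `c`, with no ghost cell in between. -/
def KohnertMovable (D : Diagram) (r c rhat : ℕ) : Prop :=
  Rightmost D r c ∧ (r, c) ∉ D.ghosts ∧
  1 ≤ rhat ∧ rhat < r ∧ (rhat, c) ∉ D.cells ∧
  ∀ r', rhat < r' → r' < r → (r', c) ∈ D.cells ∧ (r', c) ∉ D.ghosts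

/-- Result of a Kohnert move: the cell `(r,c)` moves to `(rhat,c)`. -/
def applyKohnert (D : Diagram) (r c rhat : ℕ) : Diagram :=
  ⟨insert (rhat, c) (D.cells.erase (r, c)), D.ghosts⟩

/-- Result of a ghost move: the cell `(r,c)` moves to `(rhat,c)`, leaving a
ghost cell at `(r,c)`. -/
def applyGhost (D : Diagram) (r c rhat : ℕ) : Diagram :=
  ⟨insert (rhat, c) D.cells, insert (r, c) D.ghosts⟩

/-- One (nontrivial) K-Kohnert move. -/
def KStep (D T : Diagram) : Prop :=
  ∃ r c rhat, KohnertMovable D r c rhat ∧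
    (T = applyKohnert D r c rhat ∨ T = applyGhost D r c rhat)

/-- One (nontrivial) ghost move. -/
def GStep (D T : Diagram) : Prop :=
  ∃ r c rhat, KohnertMovable D r c rhat ∧ T = applyGhost D r c rhat

/-- All diagrams obtainable from `D` by sequences of K-Kohnert moves. -/
def KKD (D : Diagram) : Set Diagram := {T | Relation.ReflTransGen KStep D T}

/-- All diagrams obtainable from `D` by sequences of ghost moves. -/
def GKD (D : Diagram) : Set Diagram := {T | Relation.ReflTransGen GStep D T}

/-- Maximum number of ghost cells over `KKD D`. -/
noncomputable def MaxG (D : Diagram) : ℕ :=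
  sSup {n | ∃ T ∈ KKD D, T.ghosts.card = n}

/-- Maximum number of ghost cells over `GKD D`. -/
noncomputable def MaxGhat (D : Diagram) : ℕ :=
  sSup {n | ∃ T ∈ GKD D, T.ghosts.card = n}

/-- Dark clouds of a ghost-free diagram: working from the top row down, mark in
each row the rightmost cell having no marked cell above it in its column. -/
def dark (D : Finset (ℕ × ℕ)) : Finset (ℕ × ℕ) :=
  ((List.range (D.sup Prod.fst + 1)).reverse).foldl
    (fun acc r =>
      let cand := (D.filter (fun p => p.1 = r ∧ ∀ q ∈ acc, q.2 ≠ p.2)).image Prod.snd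
      if h : cand.Nonempty then insert (r, cand.max' h) acc else acc) ∅

/-- Snowflakes of the snow diagram: empty positions lying below a dark cloud
in its column. -/
def snowflakes (D : Finset (ℕ × ℕ)) : Finset (ℕ × ℕ) :=
  ((Finset.range (D.sup Prod.fst + 1)) ×ˢ (D.image Prod.snd)).filter
    (fun p => 1 ≤ p.1 ∧ p ∉ D ∧ ∃ q ∈ dark D, q.2 = p.2 ∧ p.1 < q.1)

/-- Number of snowflakes of the snow diagram of a ghost-free diagram. -/
def sf (D : Finset (ℕ × ℕ)) : ℕ := (snowflakes D).card

/-- A generalized skew diagram: each nonempty row is a contiguous run of cells,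
and both leftmost and rightmost columns weakly increase with the row index. -/
def IsGenSkew (D : Finset (ℕ × ℕ)) : Prop :=
  (∀ p ∈ D, 1 ≤ p.1 ∧ 1 ≤ p.2) ∧
  (∀ r c₁ c c₂, (r, c₁) ∈ D → (r, c₂) ∈ D → c₁ ≤ c → c ≤ c₂ → (r, c) ∈ D) ∧
  (∀ r₁ r₂ c₁, r₁ < r₂ → (r₁, c₁) ∈ D → (∃ c, (r₂, c) ∈ D) →
      ∃ c₂, c₁ ≤ c₂ ∧ (r₂, c₂) ∈ D) ∧
  (∀ r₁ r₂ c₂, r₁ < r₂ → (r₂, c₂) ∈ D → (∃ c, (r₁, c) ∈ D) →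
      ∃ c₁, c₁ ≤ c₂ ∧ (r₁, c₁) ∈ D)

/-- `Key(D)`: the minimal key diagram containing `D`. -/
def keyOf (D : Finset (ℕ × ℕ)) : Finset (ℕ × ℕ) :=
  D.biUnion (fun p => (Finset.Icc 1 p.2).image (fun c => (p.1, c)))

/-- Largest index `i < j` (0-indexed) with `α_i > 0`. -/
def prevIdx (α : List ℕ) (j : ℕ) : Option ℕ :=
  ((List.range j).filter (fun i => 0 < α.getD i 0)).max?

/-- Contribution of step 2 of the skew-diagram construction at (0-indexed) row `j`. -/
def step2contrib (α : List ℕ) (j : ℕ) : ℕ :=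
  if 0 < α.getD j 0 then
    match prevIdx α j with
    | none => 0
    | some i => α.getD i 0 - α.getD j 0
  else 0

/-- Total rightward shift of (0-indexed) row `k` in the skew-diagram construction. -/
def rowShift (α : List ℕ) (k : ℕ) : ℕ :=
  (∑ j ∈ Finset.range (k + 1), step2contrib α j) +
    ((List.range k).filter (fun i => α.getD i 0 = 0)).length

/-- The skew diagram `S(α)` of a weak composition `α`. -/
def skewDiagram (α : List ℕ) : Finset (ℕ × ℕ) :=
  (Finset.range α.length).biUnion (fun i =>
    (Finset.Icc 1 (α.getD i 0)).image (fun c => (i + 1, c + rowShift α i)))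

/-- The lock diagram of a weak composition `α`: `α_i` right-justified cells in row `i`. -/
def lockDiagram (α : List ℕ) : Finset (ℕ × ℕ) :=
  (Finset.range α.length).biUnion (fun i =>
    (Finset.range (α.getD i 0)).image (fun j => (i + 1, α.foldr max 0 - j)))

/-- `L` is a lock-tableau labeling of content `α` on the given set of cells. -/
def IsLockLabeling (α : List ℕ) (cells : Finset (ℕ × ℕ)) (L : ℕ × ℕ → ℕ) : Prop :=
  (∀ p ∈ cells, 1 ≤ L p ∧ L p ≤ α.length) ∧
  (∀ j, 1 ≤ j → j ≤ α.length → 0 < α.getD (j - 1) 0 →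
    ∀ c, α.foldr max 0 - α.getD (j - 1) 0 + 1 ≤ c → c ≤ α.foldr max 0 →
      ∃! p, p ∈ cells ∧ p.2 = c ∧ L p = j) ∧
  (∀ p ∈ cells, p.1 ≤ L p) ∧
  (∀ p ∈ cells, ∀ q ∈ cells, L p = L q → p.2 < q.2 → q.1 ≤ p.1) ∧
  (∀ p ∈ cells, ∀ q ∈ cells, p.2 = q.2 → p.1 < q.1 → L p < L q)

/-- Label of the position `(r,c)` of `T`: for a ghost cell, the label of the
highest non-ghost cell weakly below it in column `c`. -/
def ghostLabel (T : Diagram) (L : ℕ × ℕ → ℕ) (r c : ℕ) : ℕ :=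
  L (((T.cells \ T.ghosts).filter (fun p => p.2 = c ∧ p.1 ≤ r)).sup Prod.fst, c)

/-- The labels, within one column with row set `Rc`, of the modified snow
diagram, where `U` is the set of rows occupied in later columns; rows are
processed from top to bottom. -/
def colLabelList (Rc U : Finset ℕ) : List (ℕ × ℕ) :=
  ((Rc.sort (· ≤ ·)).reverse).foldl
    (fun acc r =>
      if r ∈ U then (r, r) :: acc
      else
        let cand := U.filter (fun s => s < r ∧ ∀ q ∈ acc, q.2 ≠ s)
        if h : cand.Nonempty then (r, cand.max' h) :: acc else (r, 1) :: acc)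
    []

/-- The label of a cell `p ∈ D` in the modified snow diagram `snow-hat(D)`. -/
def hatLabel (D : Finset (ℕ × ℕ)) (p : ℕ × ℕ) : ℕ :=
  ((colLabelList ((D.filter (fun q => q.2 = p.2)).image Prod.fst)
      ((D.filter (fun q => p.2 < q.2)).image Prod.fst)).lookup p.1).getD 0

/-- Number of snowflakes of the modified snow diagram `snow-hat(D)`. -/
def sfhat (D : Finset (ℕ × ℕ)) : ℕ :=
  (((Finset.range (D.sup Prod.fst + 1)) ×ˢ (D.image Prod.snd)).filter
    (fun p => 1 ≤ p.1 ∧ p ∉ D ∧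
      ∃ q ∈ D, q.2 = p.2 ∧ p.1 < q.1 ∧ hatLabel D q ≤ p.1)).card

/-- Cells of `D` that are rightmost in their row. -/
def rmostCells (D : Finset (ℕ × ℕ)) : Finset (ℕ × ℕ) :=
  D.filter (fun p => ∀ q ∈ D, q.1 = p.1 → q.2 ≤ p.2)

/-- `S(D)`: cells that are not rightmost in their row and such that no cell
above them in their column is rightmost in its row. -/
def SofD (D : Finset (ℕ × ℕ)) : Finset (ℕ × ℕ) :=
  D.filter (fun p => p ∉ rmostCells D ∧
    ∀ q ∈ D, q.2 = p.2 → p.1 < q.1 → q ∉ rmostCells D)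

/-- Restriction of `D` to the columns in `C`. -/
def Res (D : Finset (ℕ × ℕ)) (C : Finset ℕ) : Finset (ℕ × ℕ) :=
  D.filter (fun p => p.2 ∈ C)

open Classical in
/-- The ghost move at row `r`, as a function (identity when no move is possible). -/
noncomputable def gmove (T : Diagram) (r : ℕ) : Diagram :=
  if h : ∃ p : ℕ × ℕ, KohnertMovable T r p.1 p.2 then
    applyGhost T r h.choose.1 h.choose.2
  else T

lemma dark_subset (D : Finset (ℕ × ℕ)) : dark D ⊆ D := by
  unfold dark
  have h : ∀ (l : List ℕ) (acc : Finset (ℕ × ℕ)), acc ⊆ D →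
      l.foldl (fun acc r =>
        let cand := (D.filter (fun p => p.1 = r ∧ ∀ q ∈ acc, q.2 ≠ p.2)).image Prod.snd
        if h : cand.Nonempty then insert (r, cand.max' h) acc else acc) acc ⊆ D := by
    intro l
    induction l with
    | nil => exact fun acc h => h
    | cons r l ih =>
      intro acc hacc
      rw [List.foldl_cons]
      apply ih
      dsimp only
      split_ifs with h
      · intro p hp
        rcases Finset.mem_insert.mp hp with h1 | h1
        · subst h1
          have hm := Finset.max'_mem _ h
          simp only [Finset.mem_image, Finset.mem_filter] at hm
          obtain ⟨q, ⟨hq, hq1, _⟩, hq2⟩ := hm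
          obtain ⟨qa, qb⟩ := q
          simp only at hq1 hq2
          subst hq1; subst hq2
          exact hq
        · exact hacc h1
      · exact hacc
  exact h _ ∅ (by simp)

/-- If D is a generalized skew diagram with dark(Key(D)) = dark(D),
then sf(D) = sf(Key(D)). -/
theorem genSkew_sf_eq_sf_key (D : Finset (ℕ × ℕ)) (hD : IsGenSkew D)
    (hdark : dark (keyOf D) = dark D) : sf D = sf (keyOf D) := by
  obtain ⟨hpos, hconv, hup, hdown⟩ := hD
  have hDK : D ⊆ keyOf D := by
    intro p hp
    simp only [keyOf, Finset.mem_biUnion, Finset.mem_image]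
    exact ⟨p, hp, p.2, Finset.mem_Icc.mpr ⟨(hpos p hp).2, le_refl _⟩, rfl⟩
  have hsup : (keyOf D).sup Prod.fst = D.sup Prod.fst := by
    apply le_antisymm
    · apply Finset.sup_le
      intro p hp
      simp only [keyOf, Finset.mem_biUnion, Finset.mem_image] at hp
      obtain ⟨q, hq, c, _, hpc⟩ := hp
      rw [← hpc]
      simpa using Finset.le_sup (f := Prod.fst) hq
    · exact Finset.sup_mono hDK
  have hmemkey : ∀ r c : ℕ, (r, c) ∈ keyOf D ↔ ∃ a ∈ D, a.1 = r ∧ 1 ≤ c ∧ c ≤ a.2 := by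
    intro r c
    simp only [keyOf, Finset.mem_biUnion, Finset.mem_image, Finset.mem_Icc]
    constructor
    · rintro ⟨a, ha, c', ⟨h1, h2⟩, heq⟩
      have hr : a.1 = r := (Prod.mk.injEq _ _ _ _).mp heq |>.1
      have hc : c' = c := (Prod.mk.injEq _ _ _ _).mp heq |>.2
      exact ⟨a, ha, hr, hc ▸ h1, hc ▸ h2⟩
    · rintro ⟨a, ha, hr, h1, h2⟩
      exact ⟨a, ha, c, ⟨h1, h2⟩, by rw [hr]⟩
  have hsnow : snowflakes D = snowflakes (keyOf D) := by
    unfold snowflakes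
    rw [hsup, hdark]
    ext ⟨r, c⟩
    simp only [Finset.mem_filter, Finset.mem_product, Finset.mem_image, Finset.mem_range]
    constructor
    · rintro ⟨⟨hr, ⟨p, hp, hpc⟩⟩, h1, hnot, q, hq, hqc, hrq⟩
      refine ⟨⟨hr, ⟨p, hDK hp, hpc⟩⟩, h1, ?_, q, hq, hqc, hrq⟩
      intro hmem
      obtain ⟨a, ha, har, hc1, hc2⟩ := (hmemkey r c).mp hmem
      have hqD : q ∈ D := dark_subset D hq
      have hqD' : (q.1, c) ∈ D := by rwa [← hqc, Prod.mk.eta]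
      have haD : (r, a.2) ∈ D := by rwa [← har, Prod.mk.eta]
      obtain ⟨c₁, hc₁le, hc₁⟩ := hdown r q.1 c hrq hqD' ⟨a.2, haD⟩
      exact hnot (hconv r c₁ c a.2 hc₁ haD hc₁le hc2)
    · rintro ⟨⟨hr, ⟨p, hp, hpc⟩⟩, h1, hnot, q, hq, hqc, hrq⟩
      have hqD : q ∈ D := dark_subset D hq
      refine ⟨⟨hr, ⟨q, hqD, hqc⟩⟩, h1, fun hm => hnot (hDK hm), q, hq, hqc, hrq⟩
  unfold sf
  rw [hsnow]
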